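/- Let k₀ ∈ ℕ be odd, ω = k₀/2 and A > 0. Then there exists κ₀ ∈ ℕ such that for every odd integer κ ≥ κ₀ and every α ∈ [0, A]: |(m + a(l))² − ω²k² + α| ≥ κ·δ₀/4 for all l ∈ (−1/2, 1/2], all m ∈ ℤ and all k ∈ κℤ_odd. In particular the infimum of |(m + a(l))² − ω²k² + α| over these parameters is strictly positive. -/

import Mathlib

/-!
Since `cos(2πl) ≥ -1`, the Floquet exponent satisfies `0 ≤ a(l) ≤ (1 - δ₀)/2`, so `m + a(l)`
stays at distance at least `δ₀/2` from every odd multiple `N/2` of `1/2`. With `N = k₀k`, which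
is odd and a multiple of `κ`, the quantity `(m + a)² - (N/2)²` factors as
`(m + a - N/2)(m + a + N/2)`: the moduli `u, v` of both factors are at least `δ₀/2` and add up to
at least `|N| ≥ κ`, so `(u - δ₀/2)(v - δ₀/2) ≥ 0` gives `uv ≥ κδ₀/2 - δ₀²/4`. For `κ` large this
absorbs the shift `α ≤ A` and leaves `κδ₀/4`.
-/

/-- The Floquet exponent function of the necklace graph. -/
noncomputable def blochA (l : ℝ) : ℝ :=
  (1 / (2 * Real.pi)) * Real.arccos ((1 / 9) * (8 * Real.cos (2 * Real.pi * l) + 1))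

/-- The constant `δ₀ = 1 - arccos(-7/9)/π`. -/
noncomputable def delta0 : ℝ := 1 - Real.arccos (-7 / 9) / Real.pi

/-- The set `κ·ℤ_odd = {κ·j : j odd}`. -/
def kappaOdd (κ : ℤ) : Set ℤ := {k | ∃ j : ℤ, Odd j ∧ k = κ * j}

lemma delta0_pos : 0 < delta0 := by
  rw [delta0, sub_pos, div_lt_one Real.pi_pos]
  exact Real.arccos_lt_pi.2 (by norm_num)

lemma delta0_le_one : delta0 ≤ 1 := by
  rw [delta0, sub_le_self_iff]
  exact div_nonneg (Real.arccos_nonneg _) Real.pi_pos.le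

lemma blochA_nonneg (l : ℝ) : 0 ≤ blochA l :=
  mul_nonneg (by positivity) (Real.arccos_nonneg _)

lemma blochA_le (l : ℝ) : blochA l ≤ 1 / 2 - delta0 / 2 := by
  have harccos : Real.arccos ((1 / 9) * (8 * Real.cos (2 * Real.pi * l) + 1)) ≤
      Real.arccos (-7 / 9) :=
    Real.arccos_le_arccos (by linarith [Real.neg_one_le_cos (2 * Real.pi * l)])
  calc blochA l ≤ (1 / (2 * Real.pi)) * Real.arccos (-7 / 9) :=
        mul_le_mul_of_nonneg_left harccos (by positivity)
    _ = 1 / 2 - delta0 / 2 := by rw [delta0]; field_simp [Real.pi_ne_zero]; ring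

lemma le_abs_int_add_sub_half_odd {a d : ℝ} (ha₀ : 0 ≤ a) (ha : a ≤ 1 / 2 - d) (m : ℤ) {N : ℤ}
    (hN : Odd N) : d ≤ |(m : ℝ) + a - N / 2| := by
  obtain ⟨p, rfl⟩ := hN
  rcases le_or_gt m p with hmp | hmp
  · have hmp' : (m : ℝ) ≤ p := by exact_mod_cast hmp
    exact le_trans (by push_cast; linarith) (neg_le_abs _)
  · have hmp' : (p : ℝ) + 1 ≤ m := by exact_mod_cast hmp
    exact le_trans (by push_cast; linarith) (le_abs_self _)

lemma sub_sq_le_mul_of_le_of_le_add {d u v K : ℝ} (hd : 0 ≤ d) (hu : d ≤ u) (hv : d ≤ v)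
    (hK : K ≤ u + v) : d * K - d ^ 2 ≤ u * v := by
  nlinarith [mul_nonneg (sub_nonneg.2 hu) (sub_nonneg.2 hv), mul_le_mul_of_nonneg_left hK hd]

lemma le_abs_sq_sub_half_odd_sq {a d : ℝ} (hd : 0 ≤ d) (ha₀ : 0 ≤ a) (ha : a ≤ 1 / 2 - d)
    (m : ℤ) {N : ℤ} (hN : Odd N) :
    d * |(N : ℝ)| - d ^ 2 ≤ |((m : ℝ) + a) ^ 2 - ((N : ℝ) / 2) ^ 2| := by
  set x : ℝ := m + a
  have hminus : d ≤ |x - N / 2| := le_abs_int_add_sub_half_odd ha₀ ha m hN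
  have hplus : d ≤ |x + N / 2| := by
    have := le_abs_int_add_sub_half_odd ha₀ ha m hN.neg
    rwa [Int.cast_neg, neg_div, sub_neg_eq_add] at this
  have hsum : |(N : ℝ)| ≤ |x - N / 2| + |x + N / 2| := by
    calc |(N : ℝ)| = |(x + N / 2) - (x - N / 2)| := by ring_nf
      _ ≤ |x + N / 2| + |x - N / 2| := abs_sub _ _
      _ = |x - N / 2| + |x + N / 2| := add_comm _ _
  calc d * |(N : ℝ)| - d ^ 2 ≤ |x - N / 2| * |x + N / 2| :=
        sub_sq_le_mul_of_le_of_le_add hd hminus hplus hsum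
    _ = |x ^ 2 - (N / 2) ^ 2| := by rw [← abs_mul]; ring_nf

lemma abs_le_abs_of_dvd_of_odd {κ N : ℤ} (hκN : κ ∣ N) (hN : Odd N) : |κ| ≤ |N| := by
  have hN₀ : N ≠ 0 := by
    rintro rfl
    exact Int.not_odd_zero hN
  exact Int.le_of_dvd (abs_pos.2 hN₀) ((abs_dvd_abs _ _).2 hκN)

theorem spectral_gap_condition_general (k₀ : ℕ) (hk₀ : Odd k₀) (A : ℝ) :
    ∃ κ₀ : ℕ, ∀ κ : ℤ, Odd κ → (κ₀ : ℤ) ≤ κ → ∀ α ∈ Set.Icc (0 : ℝ) A,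
      (0 : ℝ) < (κ : ℝ) * delta0 / 4 ∧
      ∀ l ∈ Set.Ioc (-(1 / 2) : ℝ) (1 / 2), ∀ m : ℤ, ∀ k ∈ kappaOdd κ,
        |((m : ℝ) + blochA l) ^ 2 - ((k₀ : ℝ) / 2) ^ 2 * ((k : ℤ) : ℝ) ^ 2 + α| ≥
          (κ : ℝ) * delta0 / 4 := by
  have hδ₀ := delta0_pos
  refine ⟨⌈4 * A / delta0⌉₊ + 1, fun κ hκ hκ₀ α ⟨hα₀, hαA⟩ => ?_⟩
  have hκ_pos : (0 : ℝ) < κ := by exact_mod_cast (by omega : 0 < κ)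
  have hκ_large : 4 * A + delta0 ^ 2 ≤ κ * delta0 := by
    have hκ_ge : 4 * A / delta0 + 1 ≤ (κ : ℝ) := by
      have : ((⌈4 * A / delta0⌉₊ + 1 : ℕ) : ℝ) ≤ κ := by exact_mod_cast hκ₀
      push_cast at this
      linarith [Nat.le_ceil (4 * A / delta0)]
    have := (div_le_iff₀ hδ₀).1 (le_sub_iff_add_le.2 hκ_ge)
    nlinarith [delta0_le_one]
  refine ⟨by positivity, ?_⟩
  rintro l - m _ ⟨j, hj, rfl⟩
  set N : ℤ := k₀ * (κ * j)
  have hN : Odd N := hk₀.natCast.mul (hκ.mul hj)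
  have hκN : (κ : ℝ) ≤ |(N : ℝ)| := by
    exact_mod_cast (le_abs_self κ).trans
      (abs_le_abs_of_dvd_of_odd (Dvd.intro_left (k₀ * j : ℤ) (by ring)) hN)
  have hN_sq : ((k₀ : ℝ) / 2) ^ 2 * ((κ * j : ℤ) : ℝ) ^ 2 = ((N : ℝ) / 2) ^ 2 := by
    push_cast [N]; ring
  set y := ((m : ℝ) + blochA l) ^ 2 - ((N : ℝ) / 2) ^ 2
  have hgap : delta0 / 2 * |(N : ℝ)| - (delta0 / 2) ^ 2 ≤ |y| :=
    le_abs_sq_sub_half_odd_sq (by positivity) (blochA_nonneg l) (blochA_le l) m hN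
  have hshift : |y| - α ≤ |y + α| := by
    simpa [abs_of_nonneg hα₀] using abs_sub_abs_le_abs_sub y (-α)
  rw [hN_sq, ge_iff_le]
  linarith [mul_le_mul_of_nonneg_left hκN hδ₀.le]

/-- (Spectral gap condition, Lemma 4.4.) For `ω = k₀/2` with `k₀` odd
and `A > 0` there is `κ₀` such that for all odd `κ ≥ κ₀` and all `α ∈ [0, A]` the band
values satisfy `|(m + a(l))² - ω²k² + α| ≥ κ δ₀ / 4` for all `l ∈ (-1/2, 1/2]`, `m ∈ ℤ`
and `k ∈ κℤ_odd`; in particular the infimum of these quantities is strictly positive. -/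
theorem spectral_gap_condition (k₀ : ℕ) (hk₀ : Odd k₀) (A : ℝ) (hA : 0 < A) :
    ∃ κ₀ : ℕ, ∀ κ : ℤ, Odd κ → (κ₀ : ℤ) ≤ κ → ∀ α ∈ Set.Icc (0 : ℝ) A,
      (0 : ℝ) < (κ : ℝ) * delta0 / 4 ∧
      ∀ l ∈ Set.Ioc (-(1 / 2) : ℝ) (1 / 2), ∀ m : ℤ, ∀ k ∈ kappaOdd κ,
        |((m : ℝ) + blochA l) ^ 2 - ((k₀ : ℝ) / 2) ^ 2 * ((k : ℤ) : ℝ) ^ 2 + α| ≥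
          (κ : ℝ) * delta0 / 4 :=
  spectral_gap_condition_general k₀ hk₀ A
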